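/- In any CAFE(12;G), each of the 12 solitary pairs is covered in exactly one row, and each of the 12 rows covers exactly one solitary pair; that is, the map sending each solitary pair {(i,a),(j,b)} to the row r with A r i = a and A r j = b is a well-defined bijection between the set of solitary pairs and Fin 12. -/

import Mathlib

/-!
Every solitary pair is a non-edge, so a CAFE covers it in some row. Conversely, a finite check
over the 81 rows `Fin 4 → Fin 3` shows that a row avoiding `G` covers at most one solitary pair.
Choosing a covering row for each solitary pair therefore gives an injection from the 12 solitary
pairs into the 12 rows, which must be a bijection.
-/

/-- The forbidden-edge graph `G` on vertex set `Fin 4 × Fin 3`. -/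
def EdgeSet : Set (Sym2 (Fin 4 × Fin 3)) :=
  {s((0, 0), (1, 0)), s((2, 0), (3, 0)), s((0, 1), (2, 1)),
   s((1, 1), (3, 1)), s((0, 2), (3, 2)), s((1, 2), (2, 2))}

/-- A row `c` avoids `G` if no pair of its entries forms an edge of `G`. -/
def Avoids (c : Fin 4 → Fin 3) : Prop :=
  ∀ i j : Fin 4, i ≠ j → s((i, c i), (j, c j)) ∉ EdgeSet

/-- A covering array with forbidden edges `CAFE(N; G)`. -/
def IsCAFE {N : ℕ} (A : Fin N → Fin 4 → Fin 3) : Prop :=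
  (∀ r, Avoids (A r)) ∧
  ∀ i j : Fin 4, i ≠ j → ∀ a b : Fin 3,
    s((i, a), (j, b)) ∉ EdgeSet → ∃ r, A r i = a ∧ A r j = b

/-- The pair `{(i,a),(j,b)}` (with `i ≠ j`, `a ≠ b`) is solitary if it is disjoint
from every (in fact the unique) edge of `G` joining column `i` to column `j`. -/
def Solitary (i j : Fin 4) (a b : Fin 3) : Prop :=
  i ≠ j ∧ a ≠ b ∧ ∀ c d : Fin 3, s((i, c), (j, d)) ∈ EdgeSet → a ≠ c ∧ b ≠ d

/-- The set of solitary pairs, as unordered pairs of vertices. -/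
def SolitaryPairs : Set (Sym2 (Fin 4 × Fin 3)) :=
  {p | ∃ (i j : Fin 4) (a b : Fin 3), p = s((i, a), (j, b)) ∧ Solitary i j a b}

def Covers {α β : Type*} (c : α → β) (p : Sym2 (α × β)) : Prop :=
  ∃ i j : α, p = s((i, c i), (j, c j))

theorem covers_mk_iff {α β : Type*} {c : α → β} {i j : α} {a b : β} :
    Covers c s((i, a), (j, b)) ↔ c i = a ∧ c j = b := by
  constructor
  · rintro ⟨i', j', h⟩
    simp only [Sym2.eq_iff, Prod.mk.injEq] at h
    rcases h with ⟨⟨rfl, rfl⟩, rfl, rfl⟩ | ⟨⟨rfl, rfl⟩, rfl, rfl⟩ <;>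
      exact ⟨rfl, rfl⟩
  · rintro ⟨rfl, rfl⟩
    exact ⟨i, j, rfl⟩

theorem Finset.existsUnique_of_card_le {ι α : Type*} [Fintype ι] {S : Finset α}
    {R : ι → α → Prop} (hcard : Fintype.card ι ≤ S.card) (hex : ∀ p ∈ S, ∃ r, R r p)
    (huniq : ∀ r, ∀ p ∈ S, ∀ q ∈ S, R r p → R r q → p = q) :
    (∀ p ∈ S, ∃! r, R r p) ∧ ∀ r, ∃! p, p ∈ S ∧ R r p := by
  choose f hf using hex
  have hinj : Function.Injective fun p : S => f p p.2 := by
    rintro ⟨p, hp⟩ ⟨q, hq⟩ h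
    exact Subtype.ext (huniq _ p hp q hq (hf p hp) ((show f p hp = f q hq from h) ▸ hf q hq))
  have hsurj : Function.Surjective fun p : S => f p p.2 :=
    ((Fintype.bijective_iff_injective_and_card _).2
      ⟨hinj, le_antisymm (Fintype.card_le_of_injective _ hinj) (by simpa using hcard)⟩).2
  have hrow_eq : ∀ r, ∀ p (hp : p ∈ S), R r p → r = f p hp := by
    intro r p hp hr
    obtain ⟨⟨q, hq⟩, rfl⟩ := hsurj r
    obtain rfl := huniq _ q hq p hp (hf q hq) hr
    rfl
  refine ⟨fun p hp => ⟨f p hp, hf p hp, fun r hr => hrow_eq r p hp hr⟩, fun r => ?_⟩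
  obtain ⟨⟨p, hp⟩, rfl⟩ := hsurj r
  exact ⟨p, ⟨hp, hf p hp⟩, fun q ⟨hq, hqr⟩ => huniq _ q hq p hp hqr (hf p hp)⟩

instance : DecidablePred (· ∈ EdgeSet) := by unfold EdgeSet; infer_instance

instance (i j : Fin 4) (a b : Fin 3) : Decidable (Solitary i j a b) := by
  unfold Solitary; infer_instance

instance : DecidablePred (· ∈ SolitaryPairs) := by unfold SolitaryPairs; infer_instance

instance (c : Fin 4 → Fin 3) : Decidable (Avoids c) := by unfold Avoids; infer_instance

theorem card_toFinset_solitaryPairs : SolitaryPairs.toFinset.card = 12 := by decide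

theorem Solitary.symm {i j : Fin 4} {a b : Fin 3} (h : Solitary i j a b) : Solitary j i b a :=
  ⟨h.1.symm, h.2.1.symm, fun c d he => (h.2.2 d c (Sym2.eq_swap ▸ he)).symm⟩

theorem Solitary.not_mem_edgeSet {i j : Fin 4} {a b : Fin 3} (h : Solitary i j a b) :
    s((i, a), (j, b)) ∉ EdgeSet :=
  fun he => (h.2.2 a b he).1 rfl

theorem mk_mem_solitaryPairs {i j : Fin 4} {a b : Fin 3} :
    s((i, a), (j, b)) ∈ SolitaryPairs ↔ Solitary i j a b := by
  constructor
  · rintro ⟨i', j', a', b', h, hs⟩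
    simp only [Sym2.eq_iff, Prod.mk.injEq] at h
    rcases h with ⟨⟨rfl, rfl⟩, rfl, rfl⟩ | ⟨⟨rfl, rfl⟩, rfl, rfl⟩
    · exact hs
    · exact hs.symm
  · exact fun hs => ⟨i, j, a, b, rfl, hs⟩

theorem mk_eq_mk_of_avoids_of_solitary :
    ∀ c : Fin 4 → Fin 3, Avoids c → ∀ i j i' j' : Fin 4,
      Solitary i j (c i) (c j) → Solitary i' j' (c i') (c j') →
      s((i, c i), (j, c j)) = s((i', c i'), (j', c j')) := by
  decide

theorem Avoids.eq_of_covers {c : Fin 4 → Fin 3} (hc : Avoids c) {p q : Sym2 (Fin 4 × Fin 3)}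
    (hp : p ∈ SolitaryPairs) (hq : q ∈ SolitaryPairs) (hcp : Covers c p) (hcq : Covers c q) :
    p = q := by
  obtain ⟨i, j, rfl⟩ := hcp
  obtain ⟨i', j', rfl⟩ := hcq
  exact mk_eq_mk_of_avoids_of_solitary c hc i j i' j'
    (mk_mem_solitaryPairs.1 hp) (mk_mem_solitaryPairs.1 hq)

theorem IsCAFE.exists_covers {N : ℕ} {A : Fin N → Fin 4 → Fin 3} (hA : IsCAFE A)
    {p : Sym2 (Fin 4 × Fin 3)} (hp : p ∈ SolitaryPairs) : ∃ r, Covers (A r) p := by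
  obtain ⟨i, j, a, b, rfl, hs⟩ := hp
  obtain ⟨r, hr⟩ := hA.2 i j hs.1 a b hs.not_mem_edgeSet
  exact ⟨r, covers_mk_iff.2 hr⟩

theorem solitary_pairs_biject_rows (A : Fin 12 → Fin 4 → Fin 3) (hA : IsCAFE A) :
    (∀ (i j : Fin 4) (a b : Fin 3), Solitary i j a b →
      ∃! r : Fin 12, A r i = a ∧ A r j = b) ∧
    (∀ r : Fin 12, ∃! p : Sym2 (Fin 4 × Fin 3),
      p ∈ SolitaryPairs ∧ ∃ i j : Fin 4, p = s((i, A r i), (j, A r j))) := by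
  obtain ⟨hpairs, hrows⟩ := Finset.existsUnique_of_card_le (S := SolitaryPairs.toFinset)
    (R := fun r p => Covers (A r) p) ((Fintype.card_fin 12).trans_le card_toFinset_solitaryPairs.ge)
    (fun p hp => hA.exists_covers (Set.mem_toFinset.1 hp))
    (fun r p hp q hq => (hA.1 r).eq_of_covers (Set.mem_toFinset.1 hp) (Set.mem_toFinset.1 hq))
  refine ⟨fun i j a b hs => ?_, fun r => ?_⟩
  · simpa only [covers_mk_iff] using hpairs _ (Set.mem_toFinset.2 (mk_mem_solitaryPairs.2 hs))
  · simpa only [Set.mem_toFinset, Covers] using hrows r
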